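/- (Theorem 1) Let u₁, u₂ ∈ ℝ³ be unit vectors (Alice's measurement directions) and let v₁, v₂ ∈ ℝ³ be orthonormal vectors (Bob's measurement directions). Let O := (1/√2)((u₁·σ) ⊗ (v₁·σ) + (u₂·σ) ⊗ (v₂·σ)) be the 2-settings linear steering operator. Then there exists a unit vector ψ ∈ ℂ^(Fin 2 × Fin 2) with |⟨ψ, Oψ⟩| > 1 if and only if the matrices u₁·σ and u₂·σ do not commute, i.e., (u₁·σ)(u₂·σ) ≠ (u₂·σ)(u₁·σ). -/

import Mathlib

open Matrix Kronecker Complex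

/-- The Pauli matrix σ₁. -/
noncomputable def σ1 : Matrix (Fin 2) (Fin 2) ℂ := !![0, 1; 1, 0]

/-- The Pauli matrix σ₂. -/
noncomputable def σ2 : Matrix (Fin 2) (Fin 2) ℂ := !![0, -Complex.I; Complex.I, 0]

/-- The Pauli matrix σ₃. -/
noncomputable def σ3 : Matrix (Fin 2) (Fin 2) ℂ := !![1, 0; 0, -1]

/-- For `a ∈ ℝ³`, the observable `a·σ = a₁σ₁ + a₂σ₂ + a₃σ₃`. -/
noncomputable def pauliDot (a : Fin 3 → ℝ) : Matrix (Fin 2) (Fin 2) ℂ :=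
  (a 0 : ℂ) • σ1 + (a 1 : ℂ) • σ2 + (a 2 : ℂ) • σ3

/-!
With `(a·σ)(b·σ) = (a ⬝ b) + i (a × b)·σ`, Bob's orthogonal observables anticommute and one finds
`O² = 1 - (w·σ) ⊗ (n·σ)` with `w = u₁ × u₂` and `n = v₁ × v₂` a unit vector; Alice's observables
commute exactly when `w = 0`. In that case the Hermitian `O` is unitary and Cauchy–Schwarz gives
`|⟨ψ, Oψ⟩| ≤ 1`. Otherwise `M = (w·σ) ⊗ (n·σ)` squares to `|w|²` and is traceless, so it has the
eigenvalue `-|w|`; then `O²` has the eigenvalue `1 + |w|`, so `O` has an eigenvalue `±√(1 + |w|)`,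
and a normalized eigenvector violates the inequality.
-/

namespace Matrix

variable {m n R 𝕜 : Type*}

theorem IsHermitian.kronecker [CommRing R] [StarRing R] {A : Matrix m m R} {B : Matrix n n R}
    (hA : A.IsHermitian) (hB : B.IsHermitian) : (A ⊗ₖ B).IsHermitian := by
  rw [IsHermitian, conjTranspose_kronecker, hA.eq, hB.eq]

variable [Fintype n]

theorem kronecker_add_kronecker_mul_self [Fintype m] [CommRing R] (A₁ A₂ : Matrix m m R)
    (B₁ B₂ : Matrix n n R) (hB : B₂ * B₁ = -(B₁ * B₂)) :
    (A₁ ⊗ₖ B₁ + A₂ ⊗ₖ B₂) * (A₁ ⊗ₖ B₁ + A₂ ⊗ₖ B₂) =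
      (A₁ * A₁) ⊗ₖ (B₁ * B₁) + (A₂ * A₂) ⊗ₖ (B₂ * B₂) + (A₁ * A₂ - A₂ * A₁) ⊗ₖ (B₁ * B₂) := by
  rw [sub_eq_add_neg, ← neg_one_smul R (A₂ * A₁), add_kronecker, smul_kronecker]
  simp only [add_mul, mul_add, ← mul_kronecker_mul, hB, ← neg_one_smul R (B₁ * B₂), kronecker_smul]
  abel

section CommRing

variable [CommRing R] {A : Matrix n n R} {c : R}

theorem mulVec_mulVec_sub_smul {v : n → R} (hv : (A * A) *ᵥ v = (c * c) • v) :
    A *ᵥ (A *ᵥ v - c • v) = -c • (A *ᵥ v - c • v) := by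
  rw [mulVec_sub, mulVec_smul, mulVec_mulVec, hv]
  module

theorem exists_mulVec_eq_neg_smul {v : n → R} (hv : (A * A) *ᵥ v = (c * c) • v)
    (hAv : A *ᵥ v ≠ c • v) : ∃ x ≠ 0, A *ᵥ x = -c • x :=
  ⟨_, sub_ne_zero.mpr hAv, mulVec_mulVec_sub_smul hv⟩

theorem exists_mulVec_eq_neg_smul_of_mul_self [DecidableEq n] (hA : A * A = (c * c) • 1)
    (hne : A ≠ c • 1) : ∃ x ≠ 0, A *ᵥ x = -c • x := by
  obtain ⟨v, hv⟩ : ∃ v, A *ᵥ v ≠ (c • 1 : Matrix n n R) *ᵥ v := by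
    simpa [ext_iff_mulVec] using hne
  rw [smul_mulVec, one_mulVec] at hv
  exact exists_mulVec_eq_neg_smul (by rw [hA, smul_mulVec, one_mulVec]) hv

theorem exists_mulVec_eq_smul_or_eq_neg_smul {v : n → R} (hv : (A * A) *ᵥ v = (c * c) • v)
    (hv0 : v ≠ 0) : ∃ x ≠ 0, A *ᵥ x = c • x ∨ A *ᵥ x = -c • x := by
  by_cases hAv : A *ᵥ v = c • v
  · exact ⟨v, hv0, .inl hAv⟩
  · obtain ⟨x, hx0, hx⟩ := exists_mulVec_eq_neg_smul hv hAv
    exact ⟨x, hx0, .inr hx⟩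

end CommRing

section RCLike

open scoped ComplexOrder

variable [RCLike 𝕜] {A : Matrix n n 𝕜}

theorem exists_star_dotProduct_mulVec_eq {x : n → 𝕜} {μ : 𝕜} (hx0 : x ≠ 0)
    (hx : A *ᵥ x = μ • x) : ∃ ψ, star ψ ⬝ᵥ ψ = 1 ∧ star ψ ⬝ᵥ A *ᵥ ψ = μ := by
  obtain ⟨s, hs0, hs⟩ := RCLike.pos_iff_exists_ofReal.mp (dotProduct_star_self_pos_iff.mpr hx0)
  set c : ℝ := (√s)⁻¹
  have hc : (c : 𝕜) * (c * s) = 1 := by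
    norm_cast
    rw [← mul_assoc, ← mul_inv, Real.mul_self_sqrt hs0.le, inv_mul_cancel₀ hs0.ne']
  refine ⟨(c : 𝕜) • x, ?_, ?_⟩
  · rw [star_smul, smul_dotProduct, dotProduct_smul, ← hs, RCLike.star_def, RCLike.conj_ofReal]
    simpa only [smul_eq_mul] using hc
  · rw [mulVec_smul, hx, star_smul, smul_dotProduct, dotProduct_smul, dotProduct_smul, ← hs,
      RCLike.star_def, RCLike.conj_ofReal]
    simp only [smul_eq_mul]
    linear_combination μ * hc

theorem exists_norm_star_dotProduct_mulVec_eq {c : ℝ} (hc : 0 ≤ c) {v : n → 𝕜}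
    (hv : (A * A) *ᵥ v = ((c * c : ℝ) : 𝕜) • v) (hv0 : v ≠ 0) :
    ∃ ψ, star ψ ⬝ᵥ ψ = 1 ∧ ‖star ψ ⬝ᵥ A *ᵥ ψ‖ = c := by
  rw [RCLike.ofReal_mul] at hv
  obtain ⟨x, hx0, hx | hx⟩ := exists_mulVec_eq_smul_or_eq_neg_smul hv hv0 <;>
  · obtain ⟨ψ, hψ, hψA⟩ := exists_star_dotProduct_mulVec_eq hx0 hx
    exact ⟨ψ, hψ, by simp [hψA, abs_of_nonneg hc]⟩

theorem norm_star_dotProduct_mulVec_le_one [DecidableEq n] (hA : Aᴴ * A = 1) {ψ : n → 𝕜}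
    (hψ : star ψ ⬝ᵥ ψ = 1) : ‖star ψ ⬝ᵥ A *ᵥ ψ‖ ≤ 1 := by
  have hAψ : star (A *ᵥ ψ) ⬝ᵥ A *ᵥ ψ = 1 := by
    rw [star_mulVec, ← dotProduct_mulVec, mulVec_mulVec, hA, one_mulVec, hψ]
  have hcs := inner_mul_inner_self_le (𝕜 := 𝕜) (WithLp.toLp 2 ψ) (WithLp.toLp 2 (A *ᵥ ψ))
  simp only [EuclideanSpace.inner_toLp_toLp, dotProduct_comm _ (star _), hψ, hAψ, RCLike.one_re,
    mul_one] at hcs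
  rw [star_dotProduct (A *ᵥ ψ), norm_star] at hcs
  nlinarith [norm_nonneg (star (A *ᵥ ψ) ⬝ᵥ ψ)]

end RCLike

end Matrix

theorem pauliDot_mul_pauliDot (a b : Fin 3 → ℝ) :
    pauliDot a * pauliDot b = ((a ⬝ᵥ b : ℝ) : ℂ) • 1 + I • pauliDot (a ⨯₃ b) := by
  ext i j
  fin_cases i <;> fin_cases j <;>
    simp [pauliDot, σ1, σ2, σ3, cross_apply, dotProduct, Fin.sum_univ_three, mul_apply,
      Fin.sum_univ_two, Complex.ext_iff] <;> (try constructor) <;> ring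

theorem pauliDot_zero : pauliDot 0 = 0 := by
  simp [pauliDot]

theorem pauliDot_neg (a : Fin 3 → ℝ) : pauliDot (-a) = -pauliDot a := by
  simp only [pauliDot, Pi.neg_apply, Complex.ofReal_neg, neg_smul]
  abel

theorem pauliDot_eq_zero_iff {a : Fin 3 → ℝ} : pauliDot a = 0 ↔ a = 0 := by
  refine ⟨fun h ↦ ?_, fun h ↦ h ▸ pauliDot_zero⟩
  have h00 := congrFun₂ h 0 0
  have h01 := congrFun₂ h 0 1
  ext i
  fin_cases i <;> simp_all [pauliDot, σ1, σ2, σ3, Complex.ext_iff]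

theorem pauliDot_mul_self (a : Fin 3 → ℝ) :
    pauliDot a * pauliDot a = ((a ⬝ᵥ a : ℝ) : ℂ) • 1 := by
  rw [pauliDot_mul_pauliDot, cross_self, pauliDot_zero, smul_zero, add_zero]

theorem pauliDot_mul_pauliDot_sub (a b : Fin 3 → ℝ) :
    pauliDot a * pauliDot b - pauliDot b * pauliDot a = (2 * I) • pauliDot (a ⨯₃ b) := by
  rw [pauliDot_mul_pauliDot, pauliDot_mul_pauliDot, dotProduct_comm b, ← cross_anticomm,
    pauliDot_neg]
  module

theorem commute_pauliDot_iff {a b : Fin 3 → ℝ} :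
    Commute (pauliDot a) (pauliDot b) ↔ a ⨯₃ b = 0 := by
  rw [commute_iff_eq, ← sub_eq_zero, pauliDot_mul_pauliDot_sub, smul_eq_zero,
    pauliDot_eq_zero_iff]
  simp [I_ne_zero]

theorem isHermitian_pauliDot (a : Fin 3 → ℝ) : (pauliDot a).IsHermitian := by
  ext i j
  fin_cases i <;> fin_cases j <;> simp [pauliDot, σ1, σ2, σ3]

theorem trace_pauliDot (a : Fin 3 → ℝ) : (pauliDot a).trace = 0 := by
  simp [trace, pauliDot, σ1, σ2, σ3]

section Steering

noncomputable def steeringOp (u₁ u₂ v₁ v₂ : Fin 3 → ℝ) :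
    Matrix (Fin 2 × Fin 2) (Fin 2 × Fin 2) ℂ :=
  ((1 / Real.sqrt 2 : ℝ) : ℂ) • (pauliDot u₁ ⊗ₖ pauliDot v₁ + pauliDot u₂ ⊗ₖ pauliDot v₂)

theorem isHermitian_steeringOp (u₁ u₂ v₁ v₂ : Fin 3 → ℝ) :
    (steeringOp u₁ u₂ v₁ v₂).IsHermitian :=
  (((isHermitian_pauliDot u₁).kronecker (isHermitian_pauliDot v₁)).add
    ((isHermitian_pauliDot u₂).kronecker (isHermitian_pauliDot v₂))).smul (conj_ofReal _)

variable {u₁ u₂ v₁ v₂ : Fin 3 → ℝ}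

theorem steeringOp_mul_self (hu₁ : u₁ ⬝ᵥ u₁ = 1) (hu₂ : u₂ ⬝ᵥ u₂ = 1) (hv₁ : v₁ ⬝ᵥ v₁ = 1)
    (hv₂ : v₂ ⬝ᵥ v₂ = 1) (hv₁₂ : v₁ ⬝ᵥ v₂ = 0) :
    steeringOp u₁ u₂ v₁ v₂ * steeringOp u₁ u₂ v₁ v₂ =
      1 - pauliDot (u₁ ⨯₃ u₂) ⊗ₖ pauliDot (v₁ ⨯₃ v₂) := by
  have hv : pauliDot v₁ * pauliDot v₂ = I • pauliDot (v₁ ⨯₃ v₂) := by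
    rw [pauliDot_mul_pauliDot, hv₁₂, ofReal_zero, zero_smul, zero_add]
  have hv' : pauliDot v₂ * pauliDot v₁ = -(pauliDot v₁ * pauliDot v₂) := by
    rw [hv, pauliDot_mul_pauliDot, dotProduct_comm, hv₁₂, ← cross_anticomm, pauliDot_neg]
    simp
  have hc : ((1 / Real.sqrt 2 : ℝ) : ℂ) * ((1 / Real.sqrt 2 : ℝ) : ℂ) = 1 / 2 := by
    rw [← ofReal_mul, div_mul_div_comm, one_mul, Real.mul_self_sqrt zero_le_two]
    push_cast
    rfl
  rw [steeringOp, smul_mul_smul_comm, kronecker_add_kronecker_mul_self _ _ _ _ hv',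
    pauliDot_mul_self, pauliDot_mul_self, pauliDot_mul_self, pauliDot_mul_self, hu₁, hu₂, hv₁,
    hv₂, pauliDot_mul_pauliDot_sub, hv, hc]
  simp only [ofReal_one, one_smul, one_kronecker_one, smul_kronecker, kronecker_smul, smul_smul]
  rw [mul_left_comm, I_mul_I]
  module

theorem exists_mulVec_pauliDot_kronecker_eq_neg {a b : Fin 3 → ℝ} (ha : a ≠ 0)
    (hb : b ⬝ᵥ b = 1) :
    ∃ x ≠ 0, (pauliDot a ⊗ₖ pauliDot b) *ᵥ x = -((√(a ⬝ᵥ a) : ℝ) : ℂ) • x := by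
  have ha' : 0 < a ⬝ᵥ a := by simpa using dotProduct_star_self_pos_iff.mpr ha
  refine exists_mulVec_eq_neg_smul_of_mul_self ?_ fun h ↦ ?_
  · rw [← mul_kronecker_mul, pauliDot_mul_self, pauliDot_mul_self, hb, ofReal_one, one_smul,
      smul_kronecker, one_kronecker_one, ← ofReal_mul, Real.mul_self_sqrt ha'.le]
  · have htr := congrArg trace h
    rw [trace_kronecker, trace_pauliDot, zero_mul, trace_smul, trace_one] at htr
    exact (Real.sqrt_pos.mpr ha').ne' (by simpa using htr.symm)

end Steering

/-- Theorem 1: for unit vectors `u₁, u₂` (Alice) and orthonormal `v₁, v₂` (Bob), some two-qubit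
pure state violates the 2-settings linear steering inequality (`|⟨ψ, Oψ⟩| > 1`) iff Alice's
observables `u₁·σ` and `u₂·σ` do not commute. -/
theorem steering_violation_iff_noncommuting (u₁ u₂ v₁ v₂ : Fin 3 → ℝ)
    (hu₁ : u₁ ⬝ᵥ u₁ = 1) (hu₂ : u₂ ⬝ᵥ u₂ = 1) (hv₁ : v₁ ⬝ᵥ v₁ = 1) (hv₂ : v₂ ⬝ᵥ v₂ = 1)
    (hv₁₂ : v₁ ⬝ᵥ v₂ = 0)
    (O : Matrix (Fin 2 × Fin 2) (Fin 2 × Fin 2) ℂ)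
    (hO : O = ((1 / Real.sqrt 2 : ℝ) : ℂ) •
      (pauliDot u₁ ⊗ₖ pauliDot v₁ + pauliDot u₂ ⊗ₖ pauliDot v₂)) :
    (∃ ψ : (Fin 2 × Fin 2) → ℂ, star ψ ⬝ᵥ ψ = 1 ∧ 1 < ‖star ψ ⬝ᵥ O.mulVec ψ‖) ↔
      pauliDot u₁ * pauliDot u₂ ≠ pauliDot u₂ * pauliDot u₁ := by
  obtain rfl : O = steeringOp u₁ u₂ v₁ v₂ := hO
  have hO2 := steeringOp_mul_self hu₁ hu₂ hv₁ hv₂ hv₁₂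
  rw [Ne, ← commute_iff_eq, commute_pauliDot_iff]
  constructor
  · rintro ⟨ψ, hψ, hviol⟩ hu
    rw [hu, pauliDot_zero, zero_kronecker, sub_zero] at hO2
    refine hviol.not_ge (norm_star_dotProduct_mulVec_le_one ?_ hψ)
    rwa [(isHermitian_steeringOp u₁ u₂ v₁ v₂).eq]
  · intro hu
    have hv : v₁ ⨯₃ v₂ ⬝ᵥ v₁ ⨯₃ v₂ = 1 := by
      rw [cross_dot_cross, hv₁, hv₂, dotProduct_comm v₂, hv₁₂]
      ring
    set r := √(u₁ ⨯₃ u₂ ⬝ᵥ u₁ ⨯₃ u₂)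
    obtain ⟨x, hx0, hx⟩ := exists_mulVec_pauliDot_kronecker_eq_neg hu hv
    have hO2x : (steeringOp u₁ u₂ v₁ v₂ * steeringOp u₁ u₂ v₁ v₂) *ᵥ x =
        ((√(1 + r) * √(1 + r) : ℝ) : ℂ) • x := by
      rw [hO2, sub_mulVec, one_mulVec, hx, Real.mul_self_sqrt (by positivity)]
      push_cast
      module
    obtain ⟨ψ, hψ, hOψ⟩ := exists_norm_star_dotProduct_mulVec_eq (Real.sqrt_nonneg _) hO2x hx0
    refine ⟨ψ, hψ, hOψ ▸ ?_⟩
    have hr : 0 < r := Real.sqrt_pos.mpr (by simpa using dotProduct_star_self_pos_iff.mpr hu)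
    rw [Real.lt_sqrt zero_le_one]
    linarith
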